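/- Let I₁, …, I_p be a partition of the set {1, 2, …, k}, and let a₁, …, a_k be rational numbers with 0 ≤ a_i ≤ 1 for all i and Σ_{i=1}^k a_i = 2. Set α_q = Σ_{i∈I_q} a_i and assume 0 ≤ α_q ≤ 1 for all q ∈ {1, …, p}. Then the system of equations Σ_{j=1}^k b_{ij} = a_i (for i = 1, …, k) has a solution by nonnegative rational numbers b_{ij} ≥ 0 such that b_{ij} = b_{ji} for all i, j, and b_{ij} = 0 whenever i and j belong to the same part I_q of the partition. -/

import Mathlib

private lemma clamp_diff (u v x y : ℚ) (huv : u ≤ v) (hxy : x ≤ y) :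
    max u (min v y) - max u (min v x) = max 0 (min v y - max u x) := by
  simp only [max_def, min_def]; split_ifs <;> linarith

private lemma shift_swap (A B C D : ℚ) :
    min A (B + 1) - max C (D + 1) = min B (A - 1) - max D (C - 1) := by
  simp only [min_def, max_def]; split_ifs <;> linarith

private lemma telescope_key {ι β : Type*} [LinearOrder β] [DecidableEq ι] (key : ι → β)
    (w : ι → ℚ) (f : ℚ → ℚ) :
    ∀ s : Finset ι, Set.InjOn key s →
      ∑ i ∈ s, (f (∑ j ∈ s.filter (fun j => key j ≤ key i), w j)
              - f (∑ j ∈ s.filter (fun j => key j < key i), w j))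
        = f (∑ j ∈ s, w j) - f 0 := by
  classical
  intro s
  induction s using Finset.strongInduction with
  | _ s ih =>
    intro hinj
    rcases s.eq_empty_or_nonempty with rfl | hsne
    · simp
    · obtain ⟨i₀, hi₀s, hmax⟩ := s.exists_max_image key hsne
      have hlt : ∀ j ∈ s, j ≠ i₀ → key j < key i₀ := fun j hj hne =>
        lt_of_le_of_ne (hmax j hj) (fun h => hne (hinj hj hi₀s h))
      have h1 : s.filter (fun j => key j ≤ key i₀) = s :=
        Finset.filter_true_of_mem (fun j hj => hmax j hj)
      have h2 : s.filter (fun j => key j < key i₀) = s.erase i₀ := by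
        ext j
        simp only [Finset.mem_filter, Finset.mem_erase]
        constructor
        · rintro ⟨hj, hjlt⟩; exact ⟨fun h => absurd hjlt (by simp [h]), hj⟩
        · rintro ⟨hne, hj⟩; exact ⟨hj, hlt j hj hne⟩
      have hss : s.erase i₀ ⊂ s := Finset.erase_ssubset hi₀s
      have h3 : ∀ i ∈ s.erase i₀,
          s.filter (fun j => key j ≤ key i) = (s.erase i₀).filter (fun j => key j ≤ key i) := by
        intro i hi
        ext j
        simp only [Finset.mem_filter, Finset.mem_erase]
        constructor
        · rintro ⟨hj, hjle⟩
          refine ⟨⟨fun h => ?_, hj⟩, hjle⟩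
          subst h
          obtain ⟨hine, his⟩ := Finset.mem_erase.mp hi
          exact absurd (hjle.trans_lt (hlt i his hine)) (lt_irrefl _)
        · rintro ⟨⟨_, hj⟩, hjle⟩; exact ⟨hj, hjle⟩
      have h4 : ∀ i ∈ s.erase i₀,
          s.filter (fun j => key j < key i) = (s.erase i₀).filter (fun j => key j < key i) := by
        intro i hi
        ext j
        simp only [Finset.mem_filter, Finset.mem_erase]
        constructor
        · rintro ⟨hj, hjle⟩
          refine ⟨⟨fun h => ?_, hj⟩, hjle⟩
          subst h
          obtain ⟨hine, his⟩ := Finset.mem_erase.mp hi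
          exact absurd (hjle.trans (hlt i his hine)) (lt_irrefl _)
        · rintro ⟨⟨_, hj⟩, hjle⟩; exact ⟨hj, hjle⟩
      rw [← Finset.add_sum_erase _ _ hi₀s, h1, h2]
      have hih := ih (s.erase i₀) hss (hinj.mono (by exact_mod_cast Finset.coe_subset.mpr hss.subset))
      have hrw : ∑ x ∈ s.erase i₀,
          (f (∑ j ∈ s.filter (fun j => key j ≤ key x), w j)
            - f (∑ j ∈ s.filter (fun j => key j < key x), w j))
          = f (∑ j ∈ s.erase i₀, w j) - f 0 := by
        rw [Finset.sum_congr rfl (fun i hi => by rw [h3 i hi, h4 i hi])]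
        exact hih
      rw [hrw]
      ring



/-- **Combinatorial lemma** (Lemma 9.4, [KMM94, Lemma 3.2]).
Let I₁, …, I_p be a partition of {1, …, k} and a₁, …, a_k rationals with
0 ≤ a_i ≤ 1 and Σ a_i = 2, such that each α_q = Σ_{i∈I_q} a_i lies in
[0, 1]. Then the system Σ_j b_{ij} = a_i has a nonnegative rational
symmetric solution with b_{ij} = 0 whenever i, j lie in the same part. -/
theorem partition_symmetric_solution
    (k p : ℕ) (hk : 0 < k) (hp : 0 < p)
    (I : Fin p → Finset (Fin k))
    (hdisj : ∀ q r : Fin p, q ≠ r → Disjoint (I q) (I r))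
    (hne : ∀ q : Fin p, (I q).Nonempty)
    (hcover : ∀ i : Fin k, ∃ q : Fin p, i ∈ I q)
    (a : Fin k → ℚ)
    (ha0 : ∀ i, 0 ≤ a i) (ha1 : ∀ i, a i ≤ 1)
    (hsum : ∑ i, a i = 2)
    (hα : ∀ q : Fin p, 0 ≤ ∑ i ∈ I q, a i ∧ ∑ i ∈ I q, a i ≤ 1) :
    ∃ b : Fin k → Fin k → ℚ,
      (∀ i j, 0 ≤ b i j) ∧
      (∀ i j, b i j = b j i) ∧
      (∀ i, ∑ j, b i j = a i) ∧
      (∀ (q : Fin p) (i j : Fin k), i ∈ I q → j ∈ I q → b i j = 0) := by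
  classical
  choose part hmem using hcover
  have hpart_eq : ∀ {q i}, i ∈ I q → part i = q := by
    intro q i hi
    by_contra h
    exact Finset.disjoint_left.mp (hdisj _ _ h) (hmem i) hi
  set key : Fin k → (Fin p ×ₗ Fin k) := fun i => toLex (part i, i) with hkeydef
  have hkeyinj : Function.Injective key := by
    intro i j h
    exact congrArg (fun x => (ofLex x).2) h
  set S : Fin k → ℚ := fun i => ∑ j ∈ Finset.univ.filter (fun j => key j < key i), a j
    with hSdef
  set E : Fin k → ℚ := fun i => ∑ j ∈ Finset.univ.filter (fun j => key j ≤ key i), a j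
    with hEdef
  have hES : ∀ i, E i = S i + a i := by
    intro i
    have hset : Finset.univ.filter (fun j => key j ≤ key i)
        = insert i (Finset.univ.filter (fun j => key j < key i)) := by
      ext j
      simp only [Finset.mem_filter, Finset.mem_insert, Finset.mem_univ, true_and]
      constructor
      · intro h
        rcases lt_or_eq_of_le h with h | h
        · exact Or.inr h
        · exact Or.inl (hkeyinj h)
      · rintro (rfl | h)
        · exact le_refl _
        · exact le_of_lt h
    rw [hEdef, hSdef]
    simp only
    rw [hset, Finset.sum_insert (by simp)]
    ring
  have hS0 : ∀ i, 0 ≤ S i := fun i => Finset.sum_nonneg (fun j _ => ha0 j)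
  have hE2 : ∀ i, E i ≤ 2 := by
    intro i
    calc E i ≤ ∑ j, a j :=
          Finset.sum_le_sum_of_subset_of_nonneg (Finset.filter_subset _ _)
            (fun j _ _ => ha0 j)
      _ = 2 := hsum
  have hSE : ∀ i, S i ≤ E i := fun i => by rw [hES i]; linarith [ha0 i]
  set cl : Fin k → ℚ → ℚ := fun i t => max (S i) (min (E i) t) with hcldef
  set b : Fin k → Fin k → ℚ := fun i j =>
    (cl i (E j + 1) - cl i (S j + 1)) + (cl i (E j - 1) - cl i (S j - 1)) with hbdef
  have hbform : ∀ i j, b i j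
      = max 0 (min (E i) (E j + 1) - max (S i) (S j + 1))
      + max 0 (min (E i) (E j - 1) - max (S i) (S j - 1)) := by
    intro i j
    rw [hbdef]
    simp only
    rw [hcldef]
    simp only
    rw [clamp_diff _ _ _ _ (hSE i) (by linarith [hSE j] : S j + 1 ≤ E j + 1),
        clamp_diff _ _ _ _ (hSE i) (by linarith [hSE j] : S j - 1 ≤ E j - 1)]
  refine ⟨b, ?_, ?_, ?_, ?_⟩
  · intro i j
    rw [hbform i j]
    exact add_nonneg (le_max_left _ _) (le_max_left _ _)
  · intro i j
    rw [hbform i j, hbform j i]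
    rw [shift_swap (E i) (E j) (S i) (S j), shift_swap (E j) (E i) (S j) (S i)]
    ring
  · intro i
    have t1 := telescope_key key a (fun t => cl i (t + 1)) Finset.univ hkeyinj.injOn
    have t2 := telescope_key key a (fun t => cl i (t - 1)) Finset.univ hkeyinj.injOn
    rw [hsum] at t1 t2
    have hsplit : ∑ j, b i j
        = (∑ j, (cl i (E j + 1) - cl i (S j + 1)))
        + ∑ j, (cl i (E j - 1) - cl i (S j - 1)) := by
      rw [← Finset.sum_add_distrib]
    have e1 : (∑ j, (cl i (E j + 1) - cl i (S j + 1))) = cl i (2 + 1) - cl i (0 + 1) := t1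
    have e2 : (∑ j, (cl i (E j - 1) - cl i (S j - 1))) = cl i (2 - 1) - cl i (0 - 1) := t2
    rw [hsplit, e1, e2]
    have h3 : cl i (2 + 1) = E i := by
      rw [hcldef]; simp only
      rw [min_eq_left (by linarith [hE2 i]), max_eq_right (hSE i)]
    have h4 : cl i (0 - 1) = S i := by
      rw [hcldef]; simp only
      rw [min_eq_right (by linarith [hS0 i, hSE i]), max_eq_left (by linarith [hS0 i])]
    rw [h3, h4]
    have := hES i
    have h6 : cl i (0 + 1) = cl i (2 - 1) := by norm_num
    linarith
  · intro q i j hi hj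
    have hqi : part i = q := hpart_eq hi
    have hqj : part j = q := hpart_eq hj
    have hLS : ∀ m, part m = q →
        (∑ j' ∈ Finset.univ.filter (fun j' => part j' < q), a j') ≤ S m := by
      intro m hm
      apply Finset.sum_le_sum_of_subset_of_nonneg _ (fun j' _ _ => ha0 j')
      intro j' hj'
      simp only [Finset.mem_filter, Finset.mem_univ, true_and] at hj' ⊢
      rw [hkeydef]
      exact Prod.Lex.lt_iff.mpr (Or.inl (by show part j' < part m; rw [hm]; exact hj'))
    have hEU : ∀ m, part m = q →
        E m ≤ (∑ j' ∈ Finset.univ.filter (fun j' => part j' < q), a j')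
              + ∑ j' ∈ I q, a j' := by
      intro m hm
      have hsub : Finset.univ.filter (fun j' => key j' ≤ key m)
          ⊆ (Finset.univ.filter (fun j' => part j' < q)) ∪ I q := by
        intro j' hj'
        simp only [Finset.mem_filter, Finset.mem_univ, true_and] at hj'
        simp only [Finset.mem_union, Finset.mem_filter, Finset.mem_univ, true_and]
        rw [hkeydef] at hj'
        rcases Prod.Lex.le_iff.mp hj' with h | ⟨h, _⟩
        · left; rw [← hm]; exact h
        · right
          have : part j' = q := by rw [← hm]; exact h
          rw [← this]; exact hmem j'
      have hdis : Disjoint (Finset.univ.filter (fun j' => part j' < q)) (I q) := by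
        rw [Finset.disjoint_left]
        intro j' hj' hj''
        simp only [Finset.mem_filter, Finset.mem_univ, true_and] at hj'
        rw [hpart_eq hj''] at hj'
        exact lt_irrefl _ hj'
      calc E m ≤ ∑ j' ∈ (Finset.univ.filter (fun j' => part j' < q)) ∪ I q, a j' :=
            Finset.sum_le_sum_of_subset_of_nonneg hsub (fun j' _ _ => ha0 j')
        _ = _ := Finset.sum_union hdis
    have hα1 : ∑ i' ∈ I q, a i' ≤ 1 := (hα q).2
    have h1 := hLS i hqi
    have h2 := hLS j hqj
    have h3 := hEU i hqi
    have h4 := hEU j hqj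
    rw [hbform i j]
    have hz1 : min (E i) (E j + 1) - max (S i) (S j + 1) ≤ 0 := by
      have := min_le_left (E i) (E j + 1)
      have := le_max_right (S i) (S j + 1)
      linarith
    have hz2 : min (E i) (E j - 1) - max (S i) (S j - 1) ≤ 0 := by
      have := min_le_right (E i) (E j - 1)
      have := le_max_left (S i) (S j - 1)
      linarith
    rw [max_eq_left hz1, max_eq_left hz2]
    norm_num
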